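/- Assume n ≥ 9 and let u ∈ V be well positioned (m(u) ≤ 2·MinMed). Then for all v, z ∈ V: max{1/n, dist(u,v)/W(u)} ≥ (1/18)·dist(z,v)/W(z). -/

import Mathlib

/-!
Any two closed median balls contain more than half of `V` each, so they meet and
`dist u z ≤ m(u) + m(z) ≤ 3 m(z)`. At least `⌊n/2⌋` points of `V` lie at distance `≥ m(z)`
from `z`, so `n m(z) ≤ (9/4) W(z)` once `n ≥ 9`. If `dist u v ≤ 3 m(z)`, then
`dist z v ≤ 6 m(z)` and the `1/n` term dominates; otherwise `dist z v ≤ 2 dist u v` and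
`W(u) ≤ W(z) + n dist u z ≤ (31/4) W(z)`.
-/

open Finset

/-- The `Q`-quantile distance of `u` to the finite point set `V`: the smallest radius `r`
such that the closed ball of radius `r` around `u` contains at least `Q` points of `V`. -/
noncomputable def medDist {X : Type*} [MetricSpace X] (V : Finset X) (Q : ℕ) (u : X) : ℝ :=
  sInf {r : ℝ | Q ≤ (V.filter fun v => dist u v ≤ r).card}

/-- The median distance `m(u)`: the `⌈1+n/2⌉`-th smallest distance from `u` to `V`
(where `⌈1+n/2⌉ = (n+1)/2 + 1` using integer division). -/
noncomputable def med {X : Type*} [MetricSpace X] (V : Finset X) (u : X) : ℝ :=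
  medDist V ((V.card + 1) / 2 + 1) u

section MedDist

variable {X : Type*} [MetricSpace X] (V : Finset X) {Q : ℕ}

theorem nonneg_of_le_card_filter_dist_le (hQ : 0 < Q) {u : X} {r : ℝ}
    (hr : Q ≤ #{v ∈ V | dist u v ≤ r}) : 0 ≤ r := by
  obtain ⟨v, hv⟩ := card_pos.1 (hQ.trans_le hr)
  exact dist_nonneg.trans (mem_filter.1 hv).2

theorem medDist_nonneg (hQ : 0 < Q) (u : X) : 0 ≤ medDist V Q u :=
  Real.sInf_nonneg fun _ hr => nonneg_of_le_card_filter_dist_le V hQ hr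

theorem le_card_filter_dist_le_medDist (hQV : Q ≤ #V) (u : X) :
    Q ≤ #{v ∈ V | dist u v ≤ medDist V Q u} := by
  set m := medDist V Q u
  by_cases hfar : {v ∈ V | m < dist u v}.Nonempty
  · obtain ⟨w, hw, hmin⟩ := exists_min_image _ (dist u) hfar
    have hS : {r : ℝ | Q ≤ #{v ∈ V | dist u v ≤ r}}.Nonempty :=
      ⟨∑ v ∈ V, dist u v, by
        rwa [Set.mem_ofPred_eq, filter_true_of_mem fun v hv =>
          single_le_sum (f := dist u) (fun w _ => dist_nonneg) hv]⟩
    obtain ⟨r, hrS, hrw⟩ := exists_lt_of_csInf_lt hS (mem_filter.1 hw).2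
    refine hrS.trans (card_le_card fun x hx => ?_)
    rw [mem_filter] at hx ⊢
    exact ⟨hx.1, not_lt.1 fun hmx =>
      (hx.2.trans_lt hrw).not_ge (hmin x (mem_filter.2 ⟨hx.1, hmx⟩))⟩
  · rw [not_nonempty_iff_eq_empty, filter_eq_empty_iff] at hfar
    rwa [filter_true_of_mem fun v hv => not_lt.1 (hfar hv)]

theorem card_filter_dist_lt_medDist_lt (hQ : 0 < Q) (u : X) :
    #{v ∈ V | dist u v < medDist V Q u} < Q := by
  by_contra! h
  obtain ⟨w, hw, hmax⟩ := exists_max_image _ (dist u) (card_pos.1 (hQ.trans_le h))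
  have hwS : Q ≤ #{v ∈ V | dist u v ≤ dist u w} :=
    h.trans <| card_le_card fun x hx => mem_filter.2 ⟨(mem_filter.1 hx).1, hmax x hx⟩
  have hbdd : BddBelow {r : ℝ | Q ≤ #{v ∈ V | dist u v ≤ r}} :=
    ⟨0, fun _ hr => nonneg_of_le_card_filter_dist_le V hQ hr⟩
  exact (mem_filter.1 hw).2.not_ge (csInf_le hbdd hwS)

theorem card_add_one_sub_mul_medDist_le_sum_dist (hQ : 0 < Q) (u : X) :
    ((#V + 1 - Q : ℕ) : ℝ) * medDist V Q u ≤ ∑ v ∈ V, dist u v := by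
  have hlt := card_filter_dist_lt_medDist_lt V hQ u
  set m := medDist V Q u
  have hcard : #V + 1 - Q ≤ #{v ∈ V | ¬dist u v < m} := by
    have := card_filter_add_card_filter_not (s := V) (fun v => dist u v < m)
    omega
  calc ((#V + 1 - Q : ℕ) : ℝ) * m ≤ #{v ∈ V | ¬dist u v < m} * m := by
        gcongr
        exact medDist_nonneg V hQ u
    _ = ∑ v ∈ V with ¬dist u v < m, m := by rw [sum_const, nsmul_eq_mul]
    _ ≤ ∑ v ∈ V with ¬dist u v < m, dist u v :=
        sum_le_sum fun v hv => not_lt.1 (mem_filter.1 hv).2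
    _ ≤ ∑ v ∈ V, dist u v :=
        sum_le_sum_of_subset_of_nonneg (filter_subset _ V) fun _ _ _ => dist_nonneg

theorem dist_le_medDist_add_medDist (hQV : Q ≤ #V) (hVQ : #V < 2 * Q) (u z : X) :
    dist u z ≤ medDist V Q u + medDist V Q z := by
  classical
  have hu := le_card_filter_dist_le_medDist V hQV u
  have hz := le_card_filter_dist_le_medDist V hQV z
  set A := {v ∈ V | dist u v ≤ medDist V Q u}
  set B := {v ∈ V | dist z v ≤ medDist V Q z}
  obtain ⟨y, hy⟩ : (A ∩ B).Nonempty := by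
    rw [← card_pos]
    have := card_union_add_card_inter A B
    have := card_le_card (union_subset (filter_subset _ V) (filter_subset _ V) : A ∪ B ⊆ V)
    omega
  obtain ⟨hyu, hyz⟩ := mem_inter.1 hy
  linarith [dist_triangle_right u z y, (mem_filter.1 hyu).2, (mem_filter.1 hyz).2]

end MedDist

section Med

variable {X : Type*} [MetricSpace X] (V : Finset X)

theorem med_nonneg (u : X) : 0 ≤ med V u :=
  medDist_nonneg V (Nat.succ_pos _) u

theorem dist_le_med_add_med (hV : 2 ≤ #V) (u z : X) : dist u z ≤ med V u + med V z :=
  dist_le_medDist_add_medDist V (by omega) (by omega) u z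

theorem four_mul_card_mul_med_le (hV : 9 ≤ #V) (u : X) :
    4 * #V * med V u ≤ 9 * ∑ v ∈ V, dist u v := by
  have hW : ((#V + 1 - ((#V + 1) / 2 + 1) : ℕ) : ℝ) * med V u ≤ ∑ v ∈ V, dist u v :=
    card_add_one_sub_mul_medDist_le_sum_dist V (by omega) u
  have hk : (4 * #V : ℝ) ≤ 9 * ((#V + 1 - ((#V + 1) / 2 + 1) : ℕ) : ℝ) := by
    exact_mod_cast (by omega : 4 * #V ≤ 9 * (#V + 1 - ((#V + 1) / 2 + 1)))
  nlinarith [med_nonneg V u]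

end Med

theorem sum_dist_le_sum_dist_add_card_mul {X : Type*} [MetricSpace X] (V : Finset X) (u z : X) :
    ∑ w ∈ V, dist u w ≤ ∑ w ∈ V, dist z w + #V * dist u z :=
  calc ∑ w ∈ V, dist u w ≤ ∑ w ∈ V, (dist u z + dist z w) :=
        sum_le_sum fun w _ => dist_triangle u z w
    _ = _ := by rw [sum_add_distrib, sum_const, nsmul_eq_mul, add_comm]

theorem stmt6_general {X : Type*} [MetricSpace X] (V : Finset X) (hn : 9 ≤ V.card)
    (u : X) (hwp : ∀ w ∈ V, med V u ≤ 2 * med V w) :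
    ∀ v ∈ V, ∀ z ∈ V,
      (1 / 18) * (dist z v / ∑ w ∈ V, dist z w) ≤
        max (1 / (V.card : ℝ)) (dist u v / ∑ w ∈ V, dist u w) := by
  intro v hv z hz
  have hn0 : (0 : ℝ) < V.card := by exact_mod_cast (by omega : 0 < V.card)
  have hduz : dist u z ≤ 3 * med V z := by
    linarith [dist_le_med_add_med V (by omega) u z, hwp z hz]
  have hWz0 : 0 ≤ ∑ w ∈ V, dist z w := sum_nonneg fun _ _ => dist_nonneg
  have hmedW := four_mul_card_mul_med_le V hn z
  have hzv : dist z v ≤ dist u z + dist u v := dist_triangle_left z v u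
  rcases le_or_gt (dist u v) (3 * med V z) with hnear | hfar
  · refine le_max_of_le_left ?_
    have hnzv : V.card * dist z v ≤ V.card * (6 * med V z) :=
      mul_le_mul_of_nonneg_left (by linarith) hn0.le
    calc 1 / 18 * (dist z v / ∑ w ∈ V, dist z w) = dist z v / (18 * ∑ w ∈ V, dist z w) := by
          ring
      _ ≤ 1 / V.card := div_le_of_le_mul₀ (by positivity) (by positivity) (by
          rw [one_div_mul_eq_div, le_div_iff₀ hn0]
          linarith)
  · refine le_max_of_le_right ?_
    have hWu : ∑ w ∈ V, dist u w ≤ 31 / 4 * ∑ w ∈ V, dist z w := by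
      linarith [sum_dist_le_sum_dist_add_card_mul V u z, mul_le_mul_of_nonneg_left hduz hn0.le]
    have huv0 : 0 < dist u v := dist_nonneg.trans_lt (hduz.trans_lt hfar)
    have hWu0 : 0 < ∑ w ∈ V, dist u w :=
      huv0.trans_le (single_le_sum (f := dist u) (fun w _ => dist_nonneg) hv)
    rw [mul_div_assoc', div_le_div_iff₀ (by linarith) hWu0]
    linarith [mul_le_mul (by linarith : dist z v ≤ 2 * dist u v) hWu hWu0.le (by positivity),
      mul_nonneg huv0.le hWz0]

/-- If `n ≥ 9` and `u ∈ V` is well positioned (`m(u) ≤ 2·MinMed`, i.e.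
`m(u) ≤ 2·m(w)` for all `w ∈ V`), then for all `v, z ∈ V`,
`max{1/n, dist(u,v)/W(u)} ≥ (1/18)·dist(z,v)/W(z)`. -/
theorem stmt6 {X : Type*} [MetricSpace X] (V : Finset X) (hn : 9 ≤ V.card)
    (u : X) (hu : u ∈ V) (hwp : ∀ w ∈ V, med V u ≤ 2 * med V w) :
    ∀ v ∈ V, ∀ z ∈ V,
      (1 / 18) * (dist z v / ∑ w ∈ V, dist z w) ≤
        max (1 / (V.card : ℝ)) (dist u v / ∑ w ∈ V, dist u w) :=
  stmt6_general V hn u hwp
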